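/- arXiv:1906.04537 — 2 statements merged into one kernel-verified Lean document; each statement's English description precedes it below -/
import Mathlib

section
/- Let q = 2^h, m = hk with gcd(i, m) = 1, and let σ(t) = t^(2^i) on F_{q^k}. Suppose u1, u2, u3 ∈ F_{q^k}^* are such that no two of them are F_q-proportional (i.e., u_a/u_b ∉ F_q for a ≠ b), and suppose there exist λ, μ ∈ F_q with u1 + λ u2 = μ u3 and σ(u1) + λ σ(u2) = μ σ(u3). Then λ = μ = 1. -/
/-!
Applying `σ` to `u1 + λ u2 = μ u3` and subtracting the second relation leaves
`(σ λ - λ) σ(u2) = (σ μ - μ) σ(u3)`. As `σ` permutes `F_q`, `σ λ ≠ λ` would make `u2` an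
`F_q`-multiple of `u3`; hence `σ` fixes `λ` and then `μ`. Because `gcd(i, h) = 1`, the elements of
`F_q` fixed by `t ↦ t ^ 2 ^ i` are the fixed points of `t ↦ t ^ 2`, i.e. `0` and `1`; finally
`λ = 0` or `μ = 0` would make `u1` proportional to `u3` or to `u2`.
-/

open Function

theorem FiniteField.pow_char_eq_self_of_pow_char_pow_eq_self {F : Type*} [Field F] [Fintype F]
    {p h i : ℕ} (hF : Fintype.card F = p ^ h) (hih : i.Coprime h) {a : F}
    (ha : a ^ p ^ i = a) : a ^ p = a := by
  have periodic : ∀ n, a ^ p ^ n = a → IsPeriodicPt (· ^ p) n a := fun n hn => by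
    simp only [IsPeriodicPt, IsFixedPt, pow_iterate, hn]
  have := (periodic i ha).gcd (periodic h (hF ▸ FiniteField.pow_card a))
  simpa only [IsPeriodicPt, IsFixedPt, pow_iterate, hih.gcd_eq_one, pow_one] using this

theorem FiniteField.eq_zero_or_one_of_pow_two_pow_eq_self {F : Type*} [Field F] [Fintype F]
    {h i : ℕ} (hF : Fintype.card F = 2 ^ h) (hih : i.Coprime h) {a : F}
    (ha : a ^ 2 ^ i = a) : a = 0 ∨ a = 1 :=
  IsIdempotentElem.iff_eq_zero_or_one.mp <| by
    simpa only [IsIdempotentElem, sq] using pow_char_eq_self_of_pow_char_pow_eq_self hF hih ha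

theorem pow_char_pow_eq_self_of_secant {F K : Type*} [Field F] [Finite F] [Field K]
    [Algebra F K] (p : ℕ) [Fact p.Prime] [CharP K p] {n : ℕ} {u1 u2 u3 : K} (hu3 : u3 ≠ 0)
    (h23 : ¬∃ c : F, u2 = algebraMap F K c * u3) {lam mu : F}
    (e1 : u1 + algebraMap F K lam * u2 = algebraMap F K mu * u3)
    (e2 : u1 ^ p ^ n + algebraMap F K lam * u2 ^ p ^ n = algebraMap F K mu * u3 ^ p ^ n) :
    lam ^ p ^ n = lam ∧ mu ^ p ^ n = mu := by
  set A := algebraMap F K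
  have : CharP F p := A.charP A.injective p
  have key : A (lam ^ p ^ n - lam) * u2 ^ p ^ n = A (mu ^ p ^ n - mu) * u3 ^ p ^ n := by
    have e1σ := congrArg (iterateFrobenius K p n) e1
    simp only [map_add, map_mul, iterateFrobenius_def, ← map_pow] at e1σ
    simp only [map_sub]
    linear_combination e1σ - e2
  have hlam : lam ^ p ^ n = lam := by
    by_contra hlam
    have hlam' : lam ^ p ^ n - lam ≠ 0 := sub_ne_zero.mpr hlam
    obtain ⟨c, hc⟩ := (Finite.injective_iff_surjective.mp (iterateFrobenius_inj F p n))
      ((mu ^ p ^ n - mu) / (lam ^ p ^ n - lam))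
    refine h23 ⟨c, iterateFrobenius_inj K p n ?_⟩
    apply mul_left_cancel₀ ((map_ne_zero A).mpr hlam')
    rw [map_mul, ← RingHom.map_iterateFrobenius, hc, iterateFrobenius_def, iterateFrobenius_def,
      key, map_div₀, ← mul_assoc, mul_div_cancel₀ _ ((map_ne_zero A).mpr hlam')]
  refine ⟨hlam, sub_eq_zero.mp <| (map_eq_zero A).mp ?_⟩
  rw [hlam, sub_self, map_zero, zero_mul] at key
  exact (mul_eq_zero.mp key.symm).resolve_right (pow_ne_zero _ hu3)

theorem pseudoregulus_three_secant_general (h k i : ℕ)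
    (hgcd : Nat.gcd i (h * k) = 1)
    (Fq K : Type) [Field Fq] [Field K] [Algebra Fq K]
    [Fintype Fq]
    (hq : Fintype.card Fq = 2 ^ h)
    (u1 u2 u3 : K) (hu3 : u3 ≠ 0)
    (h12 : ¬∃ c : Fq, u1 = algebraMap Fq K c * u2)
    (h13 : ¬∃ c : Fq, u1 = algebraMap Fq K c * u3)
    (h23 : ¬∃ c : Fq, u2 = algebraMap Fq K c * u3)
    (lam mu : Fq)
    (e1 : u1 + algebraMap Fq K lam * u2 = algebraMap Fq K mu * u3)
    (e2 : u1 ^ 2 ^ i + algebraMap Fq K lam * u2 ^ 2 ^ i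
            = algebraMap Fq K mu * u3 ^ 2 ^ i) :
    lam = 1 ∧ mu = 1 := by
  have : CharP Fq 2 := charP_of_card_eq_prime_pow hq
  have : CharP K 2 := charP_of_injective_algebraMap (algebraMap Fq K).injective 2
  have hih : i.Coprime h := Nat.Coprime.coprime_mul_right_right hgcd
  obtain ⟨hlam, hmu⟩ := pow_char_pow_eq_self_of_secant 2 hu3 h23 e1 e2
  have hlam0 : lam ≠ 0 := by
    rintro rfl
    exact h13 ⟨mu, by simpa using e1⟩
  have hmu0 : mu ≠ 0 := by
    rintro rfl
    refine h12 ⟨lam, ?_⟩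
    rw [map_zero, zero_mul, CharTwo.add_eq_zero] at e1
    exact e1
  exact ⟨(FiniteField.eq_zero_or_one_of_pow_two_pow_eq_self hq hih hlam).resolve_left hlam0,
    (FiniteField.eq_zero_or_one_of_pow_two_pow_eq_self hq hih hmu).resolve_left hmu0⟩

/-- Let `q = 2^h`, `K = F_{q^k}` with `gcd(i, hk) = 1` and `σ(t) = t^(2^i)`.
If `u1, u2, u3 ∈ K^*` are pairwise non-`F_q`-proportional and `λ, μ ∈ F_q` satisfy
`u1 + λ u2 = μ u3` and `σ(u1) + λ σ(u2) = μ σ(u3)`, then `λ = μ = 1`. -/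
theorem pseudoregulus_three_secant (h k i : ℕ) (hh : 1 ≤ h) (hk : 1 ≤ k)
    (hgcd : Nat.gcd i (h * k) = 1)
    (Fq K : Type) [Field Fq] [Field K] [Algebra Fq K]
    [Fintype Fq] [Fintype K]
    (hq : Fintype.card Fq = 2 ^ h) (hK : Fintype.card K = 2 ^ (h * k))
    (u1 u2 u3 : K) (hu1 : u1 ≠ 0) (hu2 : u2 ≠ 0) (hu3 : u3 ≠ 0)
    (h12 : ¬∃ c : Fq, u1 = algebraMap Fq K c * u2)
    (h13 : ¬∃ c : Fq, u1 = algebraMap Fq K c * u3)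
    (h23 : ¬∃ c : Fq, u2 = algebraMap Fq K c * u3)
    (lam mu : Fq)
    (e1 : u1 + algebraMap Fq K lam * u2 = algebraMap Fq K mu * u3)
    (e2 : u1 ^ 2 ^ i + algebraMap Fq K lam * u2 ^ 2 ^ i
            = algebraMap Fq K mu * u3 ^ 2 ^ i) :
    lam = 1 ∧ mu = 1 :=
  pseudoregulus_three_secant_general h k i hgcd Fq K hq u1 u2 u3 hu3 h12 h13 h23 lam mu e1 e2
end

section
/- Let q = 2^h, k ≥ 1, and gcd(i, hk) = 1. For u ∈ F_{q^k}^* define T_u = {(α u, α u^(2^i)) : α ∈ F_{q^k}} ⊆ F_{q^k} × F_{q^k}. If u1, u2 ∈ F_{q^k}^* and there exist α1, α2 ∈ F_{q^k}^* and μ ∈ F_q^* with (α1 u1, α1 u1^(2^i)) = (μ α2 u2, μ α2 u2^(2^i)), then u1 = u2. -/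
/-! The quotient `v = u1 / u2` is fixed both by `x ↦ x ^ 2 ^ i` (the two coordinates of the
spread equation give `u1 ^ 2 ^ i * u2 = u2 ^ 2 ^ i * u1`) and by the Frobenius `x ↦ x ^ 2 ^ (h k)`
of `K`. Fixed points of two iterates of squaring are fixed by the iterate of order
`gcd(i, h k) = 1`, so `v ^ 2 = v`, and `v ≠ 0` forces `v = 1`. -/

theorem pow_pow_gcd_eq_self {M : Type*} [Monoid M] {x : M} {n a b : ℕ}
    (ha : x ^ n ^ a = x) (hb : x ^ n ^ b = x) : x ^ n ^ Nat.gcd a b = x := by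
  have hper : ∀ m, Function.IsPeriodicPt (· ^ n) m x ↔ x ^ n ^ m = x := fun m => by
    rw [Function.IsPeriodicPt, Function.IsFixedPt, pow_iterate]
  exact (hper _).1 (((hper a).2 ha).gcd ((hper b).2 hb))

theorem pow_mul_eq_pow_mul_of_mul_eq_mul {M : Type*} [CommMonoidWithZero M] [IsCancelMulZero M]
    {α a b c : M} {m : ℕ} (hα : α ≠ 0) (h1 : α * a = c * b) (h2 : α * a ^ m = c * b ^ m) :
    a ^ m * b = b ^ m * a := by
  refine mul_left_cancel₀ hα ?_
  calc α * (a ^ m * b) = c * b ^ m * b := by rw [← mul_assoc, h2]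
    _ = b ^ m * (c * b) := by ac_rfl
    _ = α * (b ^ m * a) := by rw [← h1]; ac_rfl

theorem div_pow_eq_div_of_pow_mul_eq_pow_mul {K : Type*} [Field K] {a b : K} {m : ℕ}
    (hb : b ≠ 0) (h : a ^ m * b = b ^ m * a) : (a / b) ^ m = a / b := by
  rw [div_pow, div_eq_div_iff (pow_ne_zero m hb) hb, h, mul_comm]

theorem FiniteField.eq_one_of_pow_two_pow_eq_self {K : Type*} [Field K] [Fintype K] {n i : ℕ}
    (hK : Fintype.card K = 2 ^ n) (hin : Nat.gcd i n = 1) {x : K} (hx0 : x ≠ 0)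
    (hx : x ^ 2 ^ i = x) : x = 1 := by
  have hfrob : x ^ 2 ^ n = x := hK ▸ FiniteField.pow_card x
  have hsq : x ^ 2 = x := by simpa only [hin, pow_one] using pow_pow_gcd_eq_self hx hfrob
  exact (IsIdempotentElem.iff_eq_zero_or_one.1 ((sq x).symm.trans hsq)).resolve_left hx0

theorem spread_elements_disjoint_general (h k i : ℕ)
    (hgcd : Nat.gcd i (h * k) = 1)
    (Fq K : Type) [Field Fq] [Field K] [Algebra Fq K]
    [Fintype K]
    (hK : Fintype.card K = 2 ^ (h * k))
    (u1 u2 : K) (hu1 : u1 ≠ 0) (hu2 : u2 ≠ 0)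
    (α1 α2 : K) (hα1 : α1 ≠ 0)
    (mu : Fq)
    (e1 : α1 * u1 = algebraMap Fq K mu * α2 * u2)
    (e2 : α1 * u1 ^ 2 ^ i = algebraMap Fq K mu * α2 * u2 ^ 2 ^ i) :
    u1 = u2 := by
  have hfix : (u1 / u2) ^ 2 ^ i = u1 / u2 :=
    div_pow_eq_div_of_pow_mul_eq_pow_mul hu2 (pow_mul_eq_pow_mul_of_mul_eq_mul hα1 e1 e2)
  exact (div_eq_one_iff_eq hu2).1 <|
    FiniteField.eq_one_of_pow_two_pow_eq_self hK hgcd (div_ne_zero hu1 hu2) hfix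

/-- Let `q = 2^h`, `K = F_{q^k}`, `gcd(i, hk) = 1`. If for `u1, u2 ∈ K^*` there exist
`α1, α2 ∈ K^*` and `μ ∈ F_q^*` with `(α1 u1, α1 u1^(2^i)) = (μ α2 u2, μ α2 u2^(2^i))`,
then `u1 = u2`; i.e. distinct `u` give projectively disjoint spread elements `T_u`. -/
theorem spread_elements_disjoint (h k i : ℕ) (hh : 1 ≤ h) (hk : 1 ≤ k)
    (hgcd : Nat.gcd i (h * k) = 1)
    (Fq K : Type) [Field Fq] [Field K] [Algebra Fq K]
    [Fintype Fq] [Fintype K]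
    (hq : Fintype.card Fq = 2 ^ h) (hK : Fintype.card K = 2 ^ (h * k))
    (u1 u2 : K) (hu1 : u1 ≠ 0) (hu2 : u2 ≠ 0)
    (α1 α2 : K) (hα1 : α1 ≠ 0) (hα2 : α2 ≠ 0)
    (mu : Fq) (hmu : mu ≠ 0)
    (e1 : α1 * u1 = algebraMap Fq K mu * α2 * u2)
    (e2 : α1 * u1 ^ 2 ^ i = algebraMap Fq K mu * α2 * u2 ^ 2 ^ i) :
    u1 = u2 :=
  spread_elements_disjoint_general h k i hgcd Fq K hK u1 u2 hu1 hu2 α1 α2 hα1 mu e1 e2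
end
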